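/- arXiv:2209.04182 — 2 statements merged into one kernel-verified Lean document; each statement's English description precedes it below -/
import Mathlib

section
/- For every dimension d ≥ 1, one has the identity (∫_0^∞ Σ_{x∈ℤ^d} Φ(x) p_r(O,x) dr) · (∫_0^∞ p_θ(O,O) dθ) = ∫_0^∞ ∫_0^∞ p_{r+θ}(O,O) dr dθ, as an identity in [0,∞]. -/
open MeasureTheory ENNReal Filter Set Topology

noncomputable section

/-- `n`-step transition probabilities of the discrete-time simple random walk on `ℤ^d`:
`q 0 x y = 1_{x = y}` and `q (n+1) x y = (1/(2d)) ∑_{z ∼ y} q n x z`, where the `2d`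
neighbors of `y` are the points `y ± e i` for the unit vectors `e i`. -/
def srwQ (d : ℕ) : ℕ → (Fin d → ℤ) → (Fin d → ℤ) → ℝ
  | 0, x, y => if x = y then 1 else 0
  | n + 1, x, y => (1 / (2 * (d : ℝ))) * ∑ i : Fin d,
      (srwQ d n x (y + Pi.single i 1) + srwQ d n x (y - Pi.single i 1))

/-- Transition probabilities of the continuous-time simple random walk with jump rate 1:
`p t x y = e^{-t} ∑_n (t^n/n!) q_n(x,y)`. -/
def srwP (d : ℕ) (t : ℝ) (x y : Fin d → ℤ) : ℝ :=
  Real.exp (-t) * ∑' n : ℕ, t ^ n / (n.factorial : ℝ) * srwQ d n x y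

/-- The uniform step distribution on the `2d` unit vectors `± e i` of `ℤ^d`. -/
def stepMeasure (d : ℕ) : Measure (Fin d → ℤ) :=
  (2 * (d : ℝ≥0∞))⁻¹ • ∑ i : Fin d,
    (Measure.dirac (Pi.single i 1) + Measure.dirac (Pi.single i (-1)))

/-- `P` is the infinite product measure `μ^⊗ℕ` of the uniform step distribution `μ` over `ℕ`:
a probability measure giving every measurable cylinder set its product probability. -/
def IsStepProduct (d : ℕ) (P : Measure (ℕ → (Fin d → ℤ))) : Prop :=
  IsProbabilityMeasure P ∧
    ∀ (I : Finset ℕ) (s : ℕ → Set (Fin d → ℤ)), (∀ i ∈ I, MeasurableSet (s i)) →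
      P {ω | ∀ i ∈ I, ω i ∈ s i} = ∏ i ∈ I, stepMeasure d (s i)

/-- The simple random walk: `S_0 = O` and `S_n = ω_1 + ⋯ + ω_n` for the step sequence `ω`. -/
def walk (d : ℕ) (n : ℕ) (ω : ℕ → (Fin d → ℤ)) : Fin d → ℤ :=
  ∑ k ∈ Finset.range n, ω k

/-- The escape probability `γ_d = P(S_n ≠ O for all n ≥ 1)`. -/
def escapeProb (d : ℕ) (P : Measure (ℕ → (Fin d → ℤ))) : ℝ≥0∞ :=
  P {ω | ∀ n, 1 ≤ n → walk d n ω ≠ 0}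

/-- The hitting probability `Φ(x) = P(S_n = x for some n ≥ 0)`. -/
def hitProb (d : ℕ) (P : Measure (ℕ → (Fin d → ℤ))) (x : Fin d → ℤ) : ℝ≥0∞ :=
  P {ω | ∃ n, walk d n ω = x}

lemma srwQ_nonneg (d n : ℕ) (x y : Fin d → ℤ) : 0 ≤ srwQ d n x y := by
  induction n generalizing y with
  | zero => simp only [srwQ]; positivity
  | succ n ih =>
    simp only [srwQ]
    apply mul_nonneg (by positivity)
    exact Finset.sum_nonneg fun i _ => add_nonneg (ih _) (ih _)

lemma srwQ_le_one (d n : ℕ) (x y : Fin d → ℤ) : srwQ d n x y ≤ 1 := by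
  induction n generalizing y with
  | zero => simp only [srwQ]; split <;> norm_num
  | succ n ih =>
    simp only [srwQ]
    rcases Nat.eq_zero_or_pos d with hd | hd
    · subst hd; simp
    have h2 : (0:ℝ) < 2 * d := by positivity
    rw [div_mul_eq_mul_div, one_mul, div_le_one h2]
    calc ∑ i : Fin d, (srwQ d n x (y + Pi.single i 1) + srwQ d n x (y - Pi.single i 1))
        ≤ ∑ _i : Fin d, (2:ℝ) := by
          refine Finset.sum_le_sum fun i _ => ?_
          have := ih (y + Pi.single i 1); have := ih (y - Pi.single i 1); linarith
      _ = 2 * d := by simp [mul_comm]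

lemma srwQ_neg (d n : ℕ) (y : Fin d → ℤ) : srwQ d n 0 (-y) = srwQ d n 0 y := by
  induction n generalizing y with
  | zero => simp only [srwQ, neg_eq_zero]; simp [eq_comm]
  | succ n ih =>
    simp only [srwQ]
    congr 1
    refine Finset.sum_congr rfl fun i _ => ?_
    have h1 : -y + Pi.single i 1 = -(y - Pi.single i 1) := by ring
    have h2 : -y - Pi.single i 1 = -(y + Pi.single i 1) := by ring
    rw [h1, h2, ih, ih, add_comm]

lemma gamma_lintegral (n : ℕ) :
    ∫⁻ t in Set.Ioi (0:ℝ), ENNReal.ofReal (Real.exp (-t) * (t ^ n / n.factorial)) = 1 := by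
  have hs : (0:ℝ) < n + 1 := by positivity
  have hcong : Set.EqOn (fun x : ℝ => Real.exp (-x) * x ^ ((n:ℝ) + 1 - 1))
      (fun x : ℝ => Real.exp (-x) * x ^ n) (Set.Ioi 0) := by
    intro x hx
    simp only []
    rw [add_sub_cancel_right, Real.rpow_natCast]
  have hint : IntegrableOn (fun x : ℝ => Real.exp (-x) * x ^ n) (Set.Ioi 0) := by
    have := Real.GammaIntegral_convergent hs
    exact (this.congr_fun hcong measurableSet_Ioi)
  have hval : ∫ x in Set.Ioi (0:ℝ), Real.exp (-x) * x ^ n = n.factorial := by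
    have h1 := Real.Gamma_eq_integral hs
    rw [Real.Gamma_nat_eq_factorial] at h1
    rw [h1]
    exact setIntegral_congr_fun measurableSet_Ioi hcong.symm
  have key : ∫⁻ t in Set.Ioi (0:ℝ), ENNReal.ofReal (Real.exp (-t) * t ^ n) =
      ENNReal.ofReal (n.factorial : ℝ) := by
    rw [← hval]
    rw [← ofReal_integral_eq_lintegral_ofReal hint]
    filter_upwards [ae_restrict_mem measurableSet_Ioi] with x hx
    exact mul_nonneg (Real.exp_nonneg _) (pow_nonneg (le_of_lt hx) n)
  calc ∫⁻ t in Set.Ioi (0:ℝ), ENNReal.ofReal (Real.exp (-t) * (t ^ n / n.factorial))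
      = ∫⁻ t in Set.Ioi (0:ℝ),
          ENNReal.ofReal (Real.exp (-t) * t ^ n) * ENNReal.ofReal ((n.factorial : ℝ)⁻¹) := by
        refine setLIntegral_congr_fun measurableSet_Ioi ?_
        refine fun t ht => ?_
        beta_reduce
        rw [← ENNReal.ofReal_mul (mul_nonneg (Real.exp_nonneg _) (pow_nonneg (le_of_lt ht) n))]
        congr 1; ring
    _ = ENNReal.ofReal (n.factorial : ℝ) * ENNReal.ofReal ((n.factorial : ℝ)⁻¹) := by
        rw [lintegral_mul_const' _ _ (by simp), key]
    _ = 1 := by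
        rw [← ENNReal.ofReal_mul (by positivity)]
        rw [mul_inv_cancel₀ (by positivity)]
        simp

lemma ofReal_srwP (d : ℕ) {t : ℝ} (ht : 0 ≤ t) (x y : Fin d → ℤ) :
    ENNReal.ofReal (srwP d t x y) =
      ∑' n : ℕ, ENNReal.ofReal (Real.exp (-t) * (t ^ n / n.factorial)) *
        ENNReal.ofReal (srwQ d n x y) := by
  have hnn : ∀ n : ℕ, 0 ≤ t ^ n / (n.factorial : ℝ) * srwQ d n x y := fun n =>
    mul_nonneg (div_nonneg (pow_nonneg ht n) (by positivity)) (srwQ_nonneg d n x y)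
  have hsum : Summable (fun n : ℕ => t ^ n / (n.factorial : ℝ) * srwQ d n x y) := by
    refine Summable.of_nonneg_of_le hnn (fun n => ?_) (Real.summable_pow_div_factorial t)
    calc t ^ n / (n.factorial : ℝ) * srwQ d n x y
        ≤ t ^ n / (n.factorial : ℝ) * 1 :=
          mul_le_mul_of_nonneg_left (srwQ_le_one d n x y)
            (div_nonneg (pow_nonneg ht n) (by positivity))
      _ = t ^ n / (n.factorial : ℝ) := mul_one _
  rw [srwP, ENNReal.ofReal_mul (Real.exp_nonneg _),
    ENNReal.ofReal_tsum_of_nonneg hnn hsum, ← ENNReal.tsum_mul_left]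
  congr 1; funext n
  rw [ENNReal.ofReal_mul (div_nonneg (pow_nonneg ht n) (by positivity)),
    ENNReal.ofReal_mul (Real.exp_nonneg _), mul_assoc]

variable {d : ℕ}

lemma measE (s : Set (Fin d → ℤ)) : MeasurableSet s := s.to_countable.measurableSet

/-- padding a finite vector by zeros -/
def pad (k : ℕ) (v : Fin k → (Fin d → ℤ)) : ℕ → (Fin d → ℤ) :=
  fun i => if h : i < k then v ⟨i, h⟩ else 0

lemma pad_lt (k : ℕ) (v : Fin k → (Fin d → ℤ)) (i : ℕ) (h : i < k) :
    pad k v i = v ⟨i, h⟩ := dif_pos h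

def cyl (k : ℕ) (v : Fin k → (Fin d → ℤ)) : Set (ℕ → (Fin d → ℤ)) :=
  {ω | ∀ i : Fin k, ω i = v i}

lemma cyl_measurable (k : ℕ) (v : Fin k → (Fin d → ℤ)) : MeasurableSet (cyl k v) := by
  have : cyl k v = ⋂ i : Fin k, (fun ω : ℕ → (Fin d → ℤ) => ω i) ⁻¹' {v i} := by
    ext ω; simp [cyl, Set.mem_iInter]
  rw [this]
  exact MeasurableSet.iInter fun i => (measurable_pi_apply _) (measE _)

/-- A set of paths determined by the first `k` coordinates. -/
def Determined (k : ℕ) (A : Set (ℕ → (Fin d → ℤ))) : Prop :=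
  ∀ ω ω', (∀ i, i < k → ω i = ω' i) → (ω ∈ A ↔ ω' ∈ A)

lemma cyl_prob {P : Measure (ℕ → (Fin d → ℤ))} (hP : IsStepProduct d P)
    (k : ℕ) (v : Fin k → (Fin d → ℤ)) :
    P (cyl k v) = ∏ i : Fin k, stepMeasure d {v i} := by
  have h := hP.2 (Finset.range k) (fun i => {pad k v i}) (fun i _ => measE _)
  have hst : {ω : ℕ → (Fin d → ℤ) | ∀ i ∈ Finset.range k, ω i ∈ ({pad k v i} : Set _)}
      = cyl k v := by
    ext ω
    simp only [Set.mem_setOf_eq, Finset.mem_range, Set.mem_singleton_iff, cyl]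
    constructor
    · intro hh i; rw [hh i i.isLt, pad_lt k v i i.isLt]
    · intro hh i hi; rw [pad_lt k v i hi]; exact hh ⟨i, hi⟩
  rw [hst] at h
  rw [h, ← Fin.prod_univ_eq_prod_range (fun i => stepMeasure d {pad k v i}) k]
  exact Finset.prod_congr rfl fun i _ => by rw [pad_lt k v i i.isLt]

lemma decomp {P : Measure (ℕ → (Fin d → ℤ))} (hP : IsStepProduct d P)
    (k : ℕ) (A : Set (ℕ → (Fin d → ℤ))) (hA : Determined k A) :
    P A = ∑' v : Fin k → (Fin d → ℤ),
      Set.indicator {v : Fin k → (Fin d → ℤ) | pad k v ∈ A}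
        (fun v => ∏ i : Fin k, stepMeasure d {v i}) v := by
  set S : (Fin k → (Fin d → ℤ)) → Set (ℕ → (Fin d → ℤ)) :=
    fun v => cyl k v ∩ {ω | pad k v ∈ A} with hS
  have hU : A = ⋃ v, S v := by
    ext ω
    constructor
    · intro hω
      refine Set.mem_iUnion.2 ⟨fun i => ω i, fun i => rfl, ?_⟩
      exact (hA ω (pad k (fun i => ω i)) (fun i hi => by rw [pad_lt k _ i hi])).1 hω
    · rintro hω
      obtain ⟨v, hv1, hv2⟩ := Set.mem_iUnion.1 hω
      exact (hA (pad k v) ω (fun i hi => by rw [pad_lt k v i hi, hv1 ⟨i, hi⟩])).1 hv2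
  have hdisj : Pairwise (Function.onFun Disjoint S) := by
    intro v v' hvv'
    refine Set.disjoint_left.2 fun ω hω hω' => hvv' ?_
    funext i
    rw [← hω.1 i, ← hω'.1 i]
  have hmeas : ∀ v, MeasurableSet (S v) := by
    intro v
    by_cases h : pad k v ∈ A
    · have : S v = cyl k v := by
        rw [hS]; simp [Set.inter_eq_left]; intro ω _; exact h
      rw [this]; exact cyl_measurable k v
    · have : S v = ∅ := by
        rw [hS]; ext ω; simp [h]
      rw [this]; exact MeasurableSet.empty
  have hPU : P A = ∑' v, P (S v) := by rw [hU]; exact measure_iUnion hdisj hmeas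
  rw [hPU]
  congr 1; funext v
  by_cases h : pad k v ∈ A
  · rw [Set.indicator_of_mem (show v ∈ {v : Fin k → (Fin d → ℤ) | pad k v ∈ A} from h)]
    have : S v = cyl k v := by
      rw [hS]; simp [Set.inter_eq_left]; intro ω _; exact h
    rw [this, cyl_prob hP]
  · rw [Set.indicator_of_notMem (show v ∉ {v : Fin k → (Fin d → ℤ) | pad k v ∈ A} from h)]
    have : S v = ∅ := by rw [hS]; ext ω; simp [h]
    rw [this, measure_empty]

def shiftW (k : ℕ) (ω : ℕ → (Fin d → ℤ)) : ℕ → (Fin d → ℤ) := fun j => ω (k + j)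

lemma split {P : Measure (ℕ → (Fin d → ℤ))} (hP : IsStepProduct d P)
    (k m : ℕ) (A C : Set (ℕ → (Fin d → ℤ)))
    (hA : Determined k A) (hC : Determined m C) :
    P (A ∩ shiftW k ⁻¹' C) = P A * P C := by
  set e : ((Fin k → (Fin d → ℤ)) × (Fin m → (Fin d → ℤ))) ≃ (Fin (k+m) → (Fin d → ℤ)) :=
    (Equiv.sumArrowEquivProdArrow (Fin k) (Fin m) (Fin d → ℤ)).symm.trans
      (finSumFinEquiv.arrowCongr (Equiv.refl (Fin d → ℤ))) with he
  have hB : Determined (k + m) (A ∩ shiftW k ⁻¹' C) := by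
    intro ω ω' hh
    have h1 : ω ∈ A ↔ ω' ∈ A := hA ω ω' (fun i hi => hh i (by omega))
    have h2 : shiftW k ω ∈ C ↔ shiftW k ω' ∈ C :=
      hC _ _ (fun j hj => hh (k + j) (by omega))
    simp only [Set.mem_inter_iff, Set.mem_preimage]
    rw [h1, h2]
  -- facts about e
  have happly : ∀ (v : Fin k → (Fin d → ℤ)) (u : Fin m → (Fin d → ℤ)) (b : Fin (k+m)),
      e (v, u) b = Sum.elim v u (finSumFinEquiv.symm b) := by
    intro v u b; rfl
  have hleft : ∀ (v : Fin k → (Fin d → ℤ)) (u : Fin m → (Fin d → ℤ)) (i : ℕ) (h : i < k),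
      e (v, u) ⟨i, by omega⟩ = v ⟨i, h⟩ := by
    intro v u i h
    rw [happly]
    have : (⟨i, by omega⟩ : Fin (k+m)) = Fin.castAdd m ⟨i, h⟩ := by
      apply Fin.ext; simp
    rw [this, finSumFinEquiv_symm_apply_castAdd]
    rfl
  have hright : ∀ (v : Fin k → (Fin d → ℤ)) (u : Fin m → (Fin d → ℤ)) (j : ℕ) (h : j < m),
      e (v, u) ⟨k + j, by omega⟩ = u ⟨j, h⟩ := by
    intro v u j h
    rw [happly]
    have : (⟨k + j, by omega⟩ : Fin (k+m)) = Fin.natAdd k ⟨j, h⟩ := by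
      apply Fin.ext; simp
    rw [this, finSumFinEquiv_symm_apply_natAdd]
    rfl
  have hmem : ∀ (v : Fin k → (Fin d → ℤ)) (u : Fin m → (Fin d → ℤ)),
      (pad (k+m) (e (v, u)) ∈ A ∩ shiftW k ⁻¹' C) ↔ (pad k v ∈ A ∧ pad m u ∈ C) := by
    intro v u
    have h1 : pad (k+m) (e (v, u)) ∈ A ↔ pad k v ∈ A := by
      apply hA
      intro i hi
      rw [pad_lt _ _ i (by omega), pad_lt _ _ i hi, hleft v u i hi]
    have h2 : shiftW k (pad (k+m) (e (v, u))) ∈ C ↔ pad m u ∈ C := by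
      apply hC
      intro j hj
      show pad (k+m) (e (v, u)) (k + j) = _
      rw [pad_lt _ _ (k+j) (by omega), pad_lt _ _ j hj, hright v u j hj]
    simp only [Set.mem_inter_iff, Set.mem_preimage]
    rw [h1, h2]
  have hprod : ∀ (v : Fin k → (Fin d → ℤ)) (u : Fin m → (Fin d → ℤ)),
      ∏ b : Fin (k+m), stepMeasure d {e (v, u) b} =
        (∏ i : Fin k, stepMeasure d {v i}) * (∏ j : Fin m, stepMeasure d {u j}) := by
    intro v u
    rw [← finSumFinEquiv.prod_comp (fun b => stepMeasure d {e (v, u) b})]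
    rw [Fintype.prod_sum_type]
    congr 1
    · exact Finset.prod_congr rfl fun i _ => by
        rw [happly, Equiv.symm_apply_apply]; rfl
    · exact Finset.prod_congr rfl fun j _ => by
        rw [happly, Equiv.symm_apply_apply]; rfl
  rw [decomp hP (k+m) _ hB, decomp hP k A hA, decomp hP m C hC]
  rw [← Equiv.tsum_eq e, ENNReal.tsum_prod']
  calc ∑' (v : Fin k → (Fin d → ℤ)) (u : Fin m → (Fin d → ℤ)),
        Set.indicator {w : Fin (k+m) → (Fin d → ℤ) | pad (k+m) w ∈ A ∩ shiftW k ⁻¹' C}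
          (fun w => ∏ i : Fin (k+m), stepMeasure d {w i}) (e (v, u))
      = ∑' (v : Fin k → (Fin d → ℤ)) (u : Fin m → (Fin d → ℤ)),
          (Set.indicator {v : Fin k → (Fin d → ℤ) | pad k v ∈ A}
            (fun v => ∏ i : Fin k, stepMeasure d {v i}) v) *
          (Set.indicator {u : Fin m → (Fin d → ℤ) | pad m u ∈ C}
            (fun u => ∏ j : Fin m, stepMeasure d {u j}) u) := by
        refine tsum_congr fun v => tsum_congr fun u => ?_
        by_cases h1 : pad k v ∈ A <;> by_cases h2 : pad m u ∈ C
        · rw [Set.indicator_of_mem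
              (show e (v, u) ∈ {w : Fin (k+m) → (Fin d → ℤ) | pad (k+m) w ∈ A ∩ shiftW k ⁻¹' C}
                from (hmem v u).mpr ⟨h1, h2⟩),
            Set.indicator_of_mem (show v ∈ {v : Fin k → (Fin d → ℤ) | pad k v ∈ A} from h1),
            Set.indicator_of_mem (show u ∈ {u : Fin m → (Fin d → ℤ) | pad m u ∈ C} from h2),
            hprod v u]
        · rw [Set.indicator_of_notMem
              (show e (v, u) ∉ {w : Fin (k+m) → (Fin d → ℤ) | pad (k+m) w ∈ A ∩ shiftW k ⁻¹' C}
                from fun hw => h2 ((hmem v u).mp hw).2),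
            Set.indicator_of_notMem
              (show u ∉ {u : Fin m → (Fin d → ℤ) | pad m u ∈ C} from h2), mul_zero]
        · rw [Set.indicator_of_notMem
              (show e (v, u) ∉ {w : Fin (k+m) → (Fin d → ℤ) | pad (k+m) w ∈ A ∩ shiftW k ⁻¹' C}
                from fun hw => h1 ((hmem v u).mp hw).1),
            Set.indicator_of_notMem
              (show v ∉ {v : Fin k → (Fin d → ℤ) | pad k v ∈ A} from h1), zero_mul]
        · rw [Set.indicator_of_notMem
              (show e (v, u) ∉ {w : Fin (k+m) → (Fin d → ℤ) | pad (k+m) w ∈ A ∩ shiftW k ⁻¹' C}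
                from fun hw => h1 ((hmem v u).mp hw).1),
            Set.indicator_of_notMem
              (show v ∉ {v : Fin k → (Fin d → ℤ) | pad k v ∈ A} from h1), zero_mul]
    _ = ∑' (v : Fin k → (Fin d → ℤ)),
          (Set.indicator {v : Fin k → (Fin d → ℤ) | pad k v ∈ A}
            (fun v => ∏ i : Fin k, stepMeasure d {v i}) v) *
          ∑' (u : Fin m → (Fin d → ℤ)),
            (Set.indicator {u : Fin m → (Fin d → ℤ) | pad m u ∈ C}
              (fun u => ∏ j : Fin m, stepMeasure d {u j}) u) :=
        tsum_congr fun v => ENNReal.tsum_mul_left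
    _ = _ := ENNReal.tsum_mul_right

lemma shift_invariant {P : Measure (ℕ → (Fin d → ℤ))} (hP : IsStepProduct d P)
    (k m : ℕ) (C : Set (ℕ → (Fin d → ℤ))) (hC : Determined m C) :
    P (shiftW k ⁻¹' C) = P C := by
  have := split hP k m Set.univ C (fun ω ω' _ => Iff.rfl) hC
  have huniv : P Set.univ = 1 := hP.1.measure_univ
  rwa [Set.univ_inter, huniv, one_mul] at this



instance : MeasurableAdd₂ (Fin d → ℤ) := ⟨measurable_of_countable _⟩

lemma walk_measurable (n : ℕ) : Measurable (walk d n) :=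
  Finset.measurable_sum _ (fun k _ => measurable_pi_apply k)

lemma lintegral_step (f : (Fin d → ℤ) → ℝ≥0∞) :
    ∫⁻ e, f e ∂(stepMeasure d) = (2 * (d : ℝ≥0∞))⁻¹ *
      ∑ i : Fin d, (f (Pi.single i 1) + f (Pi.single i (-1))) := by
  rw [stepMeasure, lintegral_smul_measure, lintegral_finset_sum_measure]
  congr 1
  refine Finset.sum_congr rfl fun i _ => ?_
  rw [lintegral_add_measure, lintegral_dirac, lintegral_dirac]

lemma walk_determined (n : ℕ) (y : Fin d → ℤ) :
    Determined n {ω : ℕ → (Fin d → ℤ) | walk d n ω = y} := by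
  intro ω ω' h
  have : walk d n ω = walk d n ω' :=
    Finset.sum_congr rfl fun k hk => h k (Finset.mem_range.1 hk)
  simp only [Set.mem_setOf_eq, this]

lemma walk_dist {P : Measure (ℕ → (Fin d → ℤ))} (hP : IsStepProduct d P) (hd : 1 ≤ d) :
    ∀ (n : ℕ) (y : Fin d → ℤ),
      P {ω | walk d n ω = y} = ENNReal.ofReal (srwQ d n 0 y) := by
  intro n
  induction n with
  | zero =>
    intro y
    have hw : ∀ ω : ℕ → (Fin d → ℤ), walk d 0 ω = 0 := fun ω => Finset.sum_range_zero _
    by_cases hy : y = 0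
    · subst hy
      have : {ω : ℕ → (Fin d → ℤ) | walk d 0 ω = 0} = Set.univ := by
        ext ω; simp [hw ω]
      rw [this, hP.1.measure_univ]
      simp [srwQ]
    · have : {ω : ℕ → (Fin d → ℤ) | walk d 0 ω = y} = ∅ := by
        ext ω; simp [hw ω]; exact fun h => hy h.symm
      rw [this, measure_empty]
      have : srwQ d 0 0 y = 0 := by simp [srwQ]; exact fun h => hy h.symm
      rw [this]; simp
  | succ n ih =>
    intro y
    -- decompose on the last step
    have hU : {ω : ℕ → (Fin d → ℤ) | walk d (n+1) ω = y} =
        ⋃ e : Fin d → ℤ, ({ω | walk d n ω = y - e} ∩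
          shiftW n ⁻¹' {σ : ℕ → (Fin d → ℤ) | σ 0 = e}) := by
      ext ω
      simp only [Set.mem_setOf_eq, Set.mem_iUnion, Set.mem_inter_iff, Set.mem_preimage]
      constructor
      · intro h
        refine ⟨ω n, ?_, ?_⟩
        · rw [← h, walk, walk, Finset.sum_range_succ]; abel
        · show ω (n + 0) = ω n; rw [Nat.add_zero]
      · rintro ⟨e, h1, h2⟩
        have h2' : ω n = e := by rw [← h2]; show ω n = ω (n + 0); rw [Nat.add_zero]
        rw [walk, Finset.sum_range_succ, ← walk, h1, h2']; abel
    have hdisj : Pairwise (Function.onFun Disjoint (fun e : Fin d → ℤ =>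
        ({ω : ℕ → (Fin d → ℤ) | walk d n ω = y - e} ∩
          shiftW n ⁻¹' {σ : ℕ → (Fin d → ℤ) | σ 0 = e}))) := by
      intro e e' hee'
      refine Set.disjoint_left.2 fun ω hω hω' => hee' ?_
      have h1 : shiftW n ω 0 = e := hω.2
      have h2 : shiftW n ω 0 = e' := hω'.2
      rw [← h1, h2]
    have hmeas : ∀ e : Fin d → ℤ, MeasurableSet
        ({ω : ℕ → (Fin d → ℤ) | walk d n ω = y - e} ∩
          shiftW n ⁻¹' {σ : ℕ → (Fin d → ℤ) | σ 0 = e}) := by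
      intro e
      have hA : MeasurableSet {ω : ℕ → (Fin d → ℤ) | walk d n ω = y - e} := by
        have h' : {ω : ℕ → (Fin d → ℤ) | walk d n ω = y - e} = walk d n ⁻¹' {y - e} := rfl
        rw [h']; exact walk_measurable n (measE _)
      have hB : MeasurableSet (shiftW n ⁻¹' {σ : ℕ → (Fin d → ℤ) | σ 0 = e}) := by
        have h0 : MeasurableSet {σ : ℕ → (Fin d → ℤ) | σ 0 = e} := by
          have h' : {σ : ℕ → (Fin d → ℤ) | σ 0 = e}
              = (fun σ : ℕ → (Fin d → ℤ) => σ 0) ⁻¹' {e} := rfl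
          rw [h']; exact (measurable_pi_apply 0) (measE _)
        exact h0.preimage (measurable_pi_lambda _ fun j => measurable_pi_apply (n + j))
      exact hA.inter hB
    rw [hU, measure_iUnion hdisj hmeas]
    have hsp : ∀ e : Fin d → ℤ,
        P ({ω : ℕ → (Fin d → ℤ) | walk d n ω = y - e} ∩
          shiftW n ⁻¹' {σ : ℕ → (Fin d → ℤ) | σ 0 = e})
        = ENNReal.ofReal (srwQ d n 0 (y - e)) * stepMeasure d {e} := by
      intro e
      have h1 : Determined n {ω : ℕ → (Fin d → ℤ) | walk d n ω = y - e} :=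
        walk_determined n (y - e)
      have h2 : Determined 1 {σ : ℕ → (Fin d → ℤ) | σ 0 = e} := by
        intro σ σ' h
        simp only [Set.mem_setOf_eq, h 0 Nat.one_pos]
      rw [split hP n 1 _ _ h1 h2, ih (y - e)]
      congr 1
      -- P {σ | σ 0 = e} = stepMeasure d {e}
      have h3 := hP.2 {0} (fun _ => {e}) (fun i _ => measE _)
      have h4 : {ω : ℕ → (Fin d → ℤ) | ∀ i ∈ ({0} : Finset ℕ), ω i ∈ ({e} : Set _)} =
          {σ : ℕ → (Fin d → ℤ) | σ 0 = e} := by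
        ext σ; simp
      rw [h4] at h3
      rw [h3, Finset.prod_singleton]
    calc ∑' e : Fin d → ℤ, P ({ω : ℕ → (Fin d → ℤ) | walk d n ω = y - e} ∩
            shiftW n ⁻¹' {σ : ℕ → (Fin d → ℤ) | σ 0 = e})
        = ∑' e : Fin d → ℤ, ENNReal.ofReal (srwQ d n 0 (y - e)) * stepMeasure d {e} :=
          tsum_congr hsp
      _ = ∫⁻ e, ENNReal.ofReal (srwQ d n 0 (y - e)) ∂(stepMeasure d) :=
          (lintegral_countable' _).symm
      _ = (2 * (d : ℝ≥0∞))⁻¹ * ∑ i : Fin d,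
            (ENNReal.ofReal (srwQ d n 0 (y - Pi.single i 1)) +
             ENNReal.ofReal (srwQ d n 0 (y - Pi.single i (-1)))) := lintegral_step _
      _ = ENNReal.ofReal (srwQ d (n+1) 0 y) := by
          have hsub : ∀ i : Fin d, y - Pi.single i (-1) = y + Pi.single i 1 := by
            intro i
            have hneg : (Pi.single i (-1) : Fin d → ℤ) = -Pi.single i 1 := by
              funext j
              by_cases hji : j = i
              · subst hji; simp
              · simp [Pi.single_eq_of_ne hji]
            rw [hneg]; abel
          have hq : srwQ d (n+1) 0 y = (1 / (2 * (d:ℝ))) * ∑ i : Fin d,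
              (srwQ d n 0 (y + Pi.single i 1) + srwQ d n 0 (y - Pi.single i 1)) := rfl
          rw [hq, ENNReal.ofReal_mul (by positivity),
            ENNReal.ofReal_sum_of_nonneg (fun i _ =>
              add_nonneg (srwQ_nonneg d n 0 _) (srwQ_nonneg d n 0 _))]
          have hc : ENNReal.ofReal (1 / (2 * (d:ℝ))) = (2 * (d : ℝ≥0∞))⁻¹ := by
            have hd0 : (0:ℝ) < 2 * d := by
              have : (1:ℝ) ≤ d := by exact_mod_cast hd
              linarith
            rw [one_div, ENNReal.ofReal_inv_of_pos hd0]
            congr 1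
            rw [ENNReal.ofReal_mul (by norm_num)]
            congr 1
            · norm_num
            · exact ENNReal.ofReal_natCast d
          rw [hc]
          congr 1
          refine Finset.sum_congr rfl fun i _ => ?_
          rw [ENNReal.ofReal_add (srwQ_nonneg d n 0 _) (srwQ_nonneg d n 0 _), hsub i,
            add_comm]

lemma walk_shift_dist {P : Measure (ℕ → (Fin d → ℤ))} (hP : IsStepProduct d P) (hd : 1 ≤ d)
    (k m : ℕ) (y : Fin d → ℤ) :
    P (shiftW k ⁻¹' {ω | walk d m ω = y}) = ENNReal.ofReal (srwQ d m 0 y) := by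
  rw [shift_invariant hP k m _ (walk_determined m y), walk_dist hP hd m y]


/-- first hit of `x` at time `k` -/
def firstHit (d : ℕ) (k : ℕ) (x : Fin d → ℤ) : Set (ℕ → (Fin d → ℤ)) :=
  {ω | walk d k ω = x ∧ ∀ j, j < k → walk d j ω ≠ x}

lemma firstHit_determined (k : ℕ) (x : Fin d → ℤ) : Determined k (firstHit d k x) := by
  intro ω ω' h
  have hw : ∀ j, j ≤ k → walk d j ω = walk d j ω' := fun j hj =>
    Finset.sum_congr rfl fun i hi => h i (lt_of_lt_of_le (Finset.mem_range.1 hi) hj)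
  simp only [firstHit, Set.mem_setOf_eq]
  constructor
  · rintro ⟨h1, h2⟩
    exact ⟨by rw [← hw k le_rfl, h1], fun j hj hc => h2 j hj (by rw [hw j hj.le, hc])⟩
  · rintro ⟨h1, h2⟩
    exact ⟨by rw [hw k le_rfl, h1], fun j hj hc => h2 j hj (by rw [← hw j hj.le, hc])⟩

lemma firstHit_measurable (k : ℕ) (x : Fin d → ℤ) : MeasurableSet (firstHit d k x) := by
  have : firstHit d k x = (walk d k ⁻¹' {x}) ∩ ⋂ j ∈ Finset.range k,
      (walk d j ⁻¹' {x})ᶜ := by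
    ext ω
    simp only [firstHit, Set.mem_setOf_eq, Set.mem_inter_iff, Set.mem_preimage,
      Set.mem_singleton_iff, Set.mem_iInter, Set.mem_compl_iff, Finset.mem_range]
  rw [this]
  exact (walk_measurable k (measE _)).inter
    (MeasurableSet.biInter (Finset.range k).countable_toSet
      (fun j _ => (walk_measurable j (measE _)).compl))

lemma firstHit_disjoint (x : Fin d → ℤ) :
    Pairwise (Function.onFun Disjoint (fun k => firstHit d k x)) := by
  intro k l hkl
  refine Set.disjoint_left.2 fun ω hω hω' => ?_
  rcases lt_or_gt_of_ne hkl with h | h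
  · exact hω'.2 k h hω.1
  · exact hω.2 l h hω'.1

lemma hitProb_eq_tsum {P : Measure (ℕ → (Fin d → ℤ))} (x : Fin d → ℤ) :
    hitProb d P x = ∑' k : ℕ, P (firstHit d k x) := by
  rw [hitProb]
  have hU : {ω | ∃ n, walk d n ω = x} = ⋃ k, firstHit d k x := by
    ext ω
    simp only [Set.mem_setOf_eq, Set.mem_iUnion]
    constructor
    · intro h
      have hex : ∃ n, walk d n ω = x := h
      refine ⟨Nat.find hex, Nat.find_spec hex, fun j hj => Nat.find_min hex hj⟩
    · rintro ⟨k, h1, _⟩; exact ⟨k, h1⟩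
  rw [hU]
  exact measure_iUnion (firstHit_disjoint x) (fun k => firstHit_measurable k x)

lemma walk_add (k m : ℕ) (ω : ℕ → (Fin d → ℤ)) :
    walk d (k + m) ω = walk d k ω + walk d m (shiftW k ω) :=
  Finset.sum_range_add ω k m

lemma green_eq {P : Measure (ℕ → (Fin d → ℤ))} (hP : IsStepProduct d P) (hd : 1 ≤ d)
    (x : Fin d → ℤ) :
    ∑' n : ℕ, ENNReal.ofReal (srwQ d n 0 x) =
      hitProb d P x * ∑' m : ℕ, ENNReal.ofReal (srwQ d m 0 0) := by
  have hstep1 : ∀ n : ℕ, P {ω | walk d n ω = x} =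
      ∑' k : ℕ, P (firstHit d k x ∩ {ω | walk d n ω = x}) := by
    intro n
    have hU : {ω | walk d n ω = x} = ⋃ k, (firstHit d k x ∩ {ω | walk d n ω = x}) := by
      ext ω
      simp only [Set.mem_setOf_eq, Set.mem_iUnion, Set.mem_inter_iff]
      constructor
      · intro h
        have hex : ∃ j, walk d j ω = x := ⟨n, h⟩
        exact ⟨Nat.find hex, ⟨Nat.find_spec hex, fun j hj => Nat.find_min hex hj⟩, h⟩
      · rintro ⟨k, _, h⟩; exact h
    have hdisj : Pairwise (Function.onFun Disjoint
        (fun k => firstHit d k x ∩ {ω | walk d n ω = x})) := by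
      intro k l hkl
      exact Set.disjoint_left.2 fun ω hω hω' =>
        Set.disjoint_left.1 (firstHit_disjoint x hkl) hω.1 hω'.1
    have hmeas : ∀ k, MeasurableSet (firstHit d k x ∩ {ω | walk d n ω = x}) :=
      fun k => (firstHit_measurable k x).inter (walk_measurable n (measE {x}))
    conv_lhs => rw [hU]
    exact measure_iUnion hdisj hmeas
  have hsplit : ∀ k m : ℕ, P (firstHit d k x ∩ {ω | walk d (k + m) ω = x}) =
      P (firstHit d k x) * ENNReal.ofReal (srwQ d m 0 0) := by
    intro k m
    have hset : firstHit d k x ∩ {ω | walk d (k + m) ω = x} =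
        firstHit d k x ∩ shiftW k ⁻¹' {ω | walk d m ω = 0} := by
      ext ω
      simp only [Set.mem_inter_iff, Set.mem_preimage, Set.mem_setOf_eq, firstHit]
      constructor
      · rintro ⟨⟨h1, h2⟩, h3⟩
        refine ⟨⟨h1, h2⟩, ?_⟩
        have h4 := walk_add k m ω
        rw [h1, h3] at h4
        exact (add_eq_left).mp h4.symm
      · rintro ⟨⟨h1, h2⟩, h3⟩
        refine ⟨⟨h1, h2⟩, ?_⟩
        rw [walk_add k m ω, h1, h3, add_zero]
    rw [hset, split hP k m _ _ (firstHit_determined k x) (walk_determined m 0),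
      walk_dist hP hd m 0]
  have hzero : ∀ k n : ℕ, n < k → P (firstHit d k x ∩ {ω | walk d n ω = x}) = 0 := by
    intro k n hn
    have : firstHit d k x ∩ {ω | walk d n ω = x} = ∅ := by
      ext ω
      simp only [Set.mem_inter_iff, Set.mem_setOf_eq, Set.mem_empty_iff_false,
        iff_false, not_and, firstHit]
      rintro ⟨h1, h2⟩ h3
      exact h2 n hn h3
    rw [this, measure_empty]
  calc ∑' n : ℕ, ENNReal.ofReal (srwQ d n 0 x)
      = ∑' n : ℕ, P {ω | walk d n ω = x} :=
        tsum_congr fun n => (walk_dist hP hd n x).symm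
    _ = ∑' (n : ℕ) (k : ℕ), P (firstHit d k x ∩ {ω | walk d n ω = x}) :=
        tsum_congr hstep1
    _ = ∑' (k : ℕ) (n : ℕ), P (firstHit d k x ∩ {ω | walk d n ω = x}) :=
        ENNReal.tsum_comm
    _ = ∑' (k : ℕ) (m : ℕ), P (firstHit d k x ∩ {ω | walk d (k + m) ω = x}) := by
        refine tsum_congr fun k => ?_
        refine (Function.Injective.tsum_eq (g := fun m => k + m)
          (fun a b h => Nat.add_left_cancel h) ?_).symm
        intro n hn
        rcases Nat.lt_or_ge n k with h | h
        · exact absurd (hzero k n h) hn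
        · exact ⟨n - k, show k + (n - k) = n by omega⟩
    _ = ∑' (k : ℕ), P (firstHit d k x) * ∑' (m : ℕ), ENNReal.ofReal (srwQ d m 0 0) := by
        refine tsum_congr fun k => ?_
        rw [← ENNReal.tsum_mul_left]
        exact tsum_congr fun m => hsplit k m
    _ = hitProb d P x * ∑' m : ℕ, ENNReal.ofReal (srwQ d m 0 0) := by
        rw [ENNReal.tsum_mul_right, hitProb_eq_tsum]


lemma coeff_measurable (n : ℕ) :
    Measurable (fun t : ℝ => ENNReal.ofReal (Real.exp (-t) * (t ^ n / n.factorial))) := by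
  refine ENNReal.measurable_ofReal.comp ?_
  exact ((Real.continuous_exp.comp continuous_neg).mul
    ((continuous_pow n).div_const _)).measurable

lemma integral_p (x : Fin d → ℤ) :
    ∫⁻ r in Set.Ioi (0:ℝ), ENNReal.ofReal (srwP d r 0 x) =
      ∑' n : ℕ, ENNReal.ofReal (srwQ d n 0 x) := by
  have hcong : ∫⁻ r in Set.Ioi (0:ℝ), ENNReal.ofReal (srwP d r 0 x) =
      ∫⁻ r in Set.Ioi (0:ℝ), ∑' n : ℕ,
        ENNReal.ofReal (Real.exp (-r) * (r ^ n / n.factorial)) *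
          ENNReal.ofReal (srwQ d n 0 x) := by
    refine setLIntegral_congr_fun measurableSet_Ioi ?_
    exact fun t ht => ofReal_srwP d (le_of_lt ht) 0 x
  rw [hcong, lintegral_tsum (fun n => ((coeff_measurable n).mul_const _).aemeasurable)]
  refine tsum_congr fun n => ?_
  rw [lintegral_mul_const' _ _ (by simp), gamma_lintegral n, one_mul]


lemma coeff_double (n : ℕ) :
    (∫⁻ r in Set.Ioi (0:ℝ), ∫⁻ θ in Set.Ioi (0:ℝ),
      ENNReal.ofReal (Real.exp (-(r+θ)) * ((r+θ) ^ n / n.factorial)))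
    = ENNReal.ofReal ((n : ℝ) + 1) := by
  set f : ℝ → ℝ≥0∞ := fun t => ENNReal.ofReal (Real.exp (-t) * (t ^ n / n.factorial)) with hf
  have hfm : Measurable f := coeff_measurable n
  have hinner : ∀ r : ℝ, (∫⁻ θ in Set.Ioi (0:ℝ), f (r + θ)) =
      ∫⁻ t, (Set.Ioi r).indicator f t := by
    intro r
    have hpt : ∀ θ : ℝ, (Set.Ioi r).indicator f (θ + r) =
        (Set.Ioi (0:ℝ)).indicator (fun θ => f (r + θ)) θ := by
      intro θ
      by_cases hθ : 0 < θ
      · rw [Set.indicator_of_mem (show θ + r ∈ Set.Ioi r by simp [hθ]),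
          Set.indicator_of_mem (show θ ∈ Set.Ioi (0:ℝ) from hθ), add_comm]
      · rw [Set.indicator_of_notMem (show θ + r ∉ Set.Ioi r by simp; linarith [not_lt.1 hθ]),
          Set.indicator_of_notMem (show θ ∉ Set.Ioi (0:ℝ) from hθ)]
    calc (∫⁻ θ in Set.Ioi (0:ℝ), f (r + θ))
        = ∫⁻ θ, (Set.Ioi (0:ℝ)).indicator (fun θ => f (r + θ)) θ :=
          (lintegral_indicator measurableSet_Ioi _).symm
      _ = ∫⁻ θ, (Set.Ioi r).indicator f (θ + r) := lintegral_congr fun θ => (hpt θ).symm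
      _ = ∫⁻ t, (Set.Ioi r).indicator f t := lintegral_add_right_eq_self _ r
  have hswap : (∫⁻ r in Set.Ioi (0:ℝ), ∫⁻ t, (Set.Ioi r).indicator f t)
      = ∫⁻ t, ∫⁻ r in Set.Ioi (0:ℝ), (Set.Ioi r).indicator f t := by
    refine lintegral_lintegral_swap ?_
    have : Function.uncurry (fun r t => (Set.Ioi r).indicator f t) =
        fun p : ℝ × ℝ => ({q : ℝ × ℝ | q.1 < q.2}).indicator (fun q => f q.2) p := by
      funext p
      rw [Function.uncurry]
      rw [Set.indicator_apply, Set.indicator_apply]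
      rfl
    rw [this]
    exact ((hfm.comp measurable_snd).indicator
      (measurableSet_lt measurable_fst measurable_snd)).aemeasurable
  have hinner2 : ∀ t : ℝ, (∫⁻ r in Set.Ioi (0:ℝ), (Set.Ioi r).indicator f t)
      = f t * ENNReal.ofReal t := by
    intro t
    have hpt : ∀ r : ℝ, (Set.Ioi r).indicator f t = (Set.Iio t).indicator (fun _ => f t) r := by
      intro r
      rw [Set.indicator_apply, Set.indicator_apply]
      simp only [Set.mem_Ioi, Set.mem_Iio]
    calc (∫⁻ r in Set.Ioi (0:ℝ), (Set.Ioi r).indicator f t)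
        = ∫⁻ r in Set.Ioi (0:ℝ), (Set.Iio t).indicator (fun _ => f t) r :=
          lintegral_congr fun r => hpt r
      _ = ∫⁻ r in Set.Iio t, (fun _ => f t) r ∂(volume.restrict (Set.Ioi 0)) :=
          lintegral_indicator measurableSet_Iio _
      _ = f t * volume (Set.Iio t ∩ Set.Ioi 0) := by
          rw [Measure.restrict_restrict measurableSet_Iio, setLIntegral_const]
      _ = f t * ENNReal.ofReal t := by
          congr 1
          have : Set.Iio t ∩ Set.Ioi 0 = Set.Ioo 0 t := by
            ext r; simp [Set.mem_Ioo, and_comm]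
          rw [this, Real.volume_Ioo, sub_zero]
  have hres : (∫⁻ t, f t * ENNReal.ofReal t)
      = ∫⁻ t in Set.Ioi (0:ℝ), f t * ENNReal.ofReal t := by
    rw [← lintegral_indicator measurableSet_Ioi]
    refine lintegral_congr fun t => ?_
    by_cases ht : 0 < t
    · rw [Set.indicator_of_mem (show t ∈ Set.Ioi (0:ℝ) from ht)]
    · rw [Set.indicator_of_notMem (show t ∉ Set.Ioi (0:ℝ) from ht),
        ENNReal.ofReal_eq_zero.2 (not_lt.1 ht), mul_zero]
  have hfinal : (∫⁻ t in Set.Ioi (0:ℝ), f t * ENNReal.ofReal t)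
      = ENNReal.ofReal ((n : ℝ) + 1) := by
    have hptf : ∀ t ∈ Set.Ioi (0:ℝ), f t * ENNReal.ofReal t =
        ENNReal.ofReal ((n : ℝ) + 1) *
          ENNReal.ofReal (Real.exp (-t) * (t ^ (n+1) / (n+1).factorial)) := by
      intro t ht
      have ht' : (0:ℝ) < t := ht
      have h1 : f t * ENNReal.ofReal t =
          ENNReal.ofReal (Real.exp (-t) * (t ^ n / n.factorial) * t) := by
        rw [hf, ← ENNReal.ofReal_mul (by positivity)]
      have h2 : Real.exp (-t) * (t ^ n / n.factorial) * t =
          ((n : ℝ) + 1) * (Real.exp (-t) * (t ^ (n+1) / (n+1).factorial)) := by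
        rw [Nat.factorial_succ]
        have hnf : (n.factorial : ℝ) ≠ 0 := by positivity
        push_cast
        field_simp
        ring
      rw [h1, h2, ENNReal.ofReal_mul (by positivity)]
    rw [setLIntegral_congr_fun measurableSet_Ioi hptf,
      lintegral_const_mul' _ _ ENNReal.ofReal_ne_top, gamma_lintegral (n+1), mul_one]
  calc (∫⁻ r in Set.Ioi (0:ℝ), ∫⁻ θ in Set.Ioi (0:ℝ),
        ENNReal.ofReal (Real.exp (-(r+θ)) * ((r+θ) ^ n / n.factorial)))
      = ∫⁻ r in Set.Ioi (0:ℝ), ∫⁻ t, (Set.Ioi r).indicator f t := by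
        exact setLIntegral_congr_fun measurableSet_Ioi
          (fun r _ => hinner r)
    _ = ∫⁻ t, ∫⁻ r in Set.Ioi (0:ℝ), (Set.Ioi r).indicator f t := hswap
    _ = ∫⁻ t, f t * ENNReal.ofReal t := lintegral_congr fun t => hinner2 t
    _ = ∫⁻ t in Set.Ioi (0:ℝ), f t * ENNReal.ofReal t := hres
    _ = ENNReal.ofReal ((n : ℝ) + 1) := hfinal


lemma double_integral_eq (d : ℕ) :
    (∫⁻ r in Set.Ioi (0:ℝ), ∫⁻ θ in Set.Ioi (0:ℝ), ENNReal.ofReal (srwP d (r + θ) 0 0))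
    = ∑' n : ℕ, ENNReal.ofReal ((n : ℝ) + 1) * ENNReal.ofReal (srwQ d n 0 0) := by
  have hmeas2 : ∀ n : ℕ, Measurable (fun p : ℝ × ℝ =>
      ENNReal.ofReal (Real.exp (-(p.1 + p.2)) * ((p.1 + p.2) ^ n / n.factorial))) := by
    intro n
    exact (coeff_measurable n).comp (measurable_fst.add measurable_snd)
  have hstep1 : (∫⁻ r in Set.Ioi (0:ℝ), ∫⁻ θ in Set.Ioi (0:ℝ),
      ENNReal.ofReal (srwP d (r + θ) 0 0))
      = ∫⁻ r in Set.Ioi (0:ℝ), ∑' n : ℕ,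
          (∫⁻ θ in Set.Ioi (0:ℝ),
            ENNReal.ofReal (Real.exp (-(r+θ)) * ((r+θ) ^ n / n.factorial))) *
          ENNReal.ofReal (srwQ d n 0 0) := by
    refine setLIntegral_congr_fun measurableSet_Ioi (fun r hr => ?_)
    have h1 : (∫⁻ θ in Set.Ioi (0:ℝ), ENNReal.ofReal (srwP d (r + θ) 0 0))
        = ∫⁻ θ in Set.Ioi (0:ℝ), ∑' n : ℕ,
            ENNReal.ofReal (Real.exp (-(r+θ)) * ((r+θ) ^ n / n.factorial)) *
            ENNReal.ofReal (srwQ d n 0 0) := by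
      refine setLIntegral_congr_fun measurableSet_Ioi
        (fun θ hθ => ?_)
      have hrθ : (0:ℝ) ≤ r + θ := by
        have : (0:ℝ) < r := hr
        have : (0:ℝ) < θ := hθ
        linarith
      exact ofReal_srwP d hrθ 0 0
    rw [h1]
    refine Eq.trans (lintegral_tsum fun n => Measurable.aemeasurable ?_)
      (tsum_congr fun n => lintegral_mul_const' _ _ (by simp))
    exact ((coeff_measurable n).comp (measurable_const.add measurable_id)).mul_const _
  rw [hstep1, lintegral_tsum]
  · refine tsum_congr fun n => ?_
    rw [lintegral_mul_const' _ _ (by simp), coeff_double n]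
  · intro n
    refine Measurable.aemeasurable ?_
    refine Measurable.mul_const ?_ _
    exact (hmeas2 n).lintegral_prod_right'

lemma count_antidiagonal (a : ℕ → ℝ≥0∞) :
    (∑' (k : ℕ) (m : ℕ), a (k + m)) = ∑' n : ℕ, ENNReal.ofReal ((n : ℝ) + 1) * a n := by
  have h1 : ∀ k : ℕ, (∑' m : ℕ, a (k + m)) = ∑' n : ℕ, if k ≤ n then a n else 0 := by
    intro k
    have hsupp : Function.support (fun n => if k ≤ n then a n else 0) ⊆
        Set.range (fun m => k + m) := by
      intro n hn
      rcases Nat.lt_or_ge n k with h | h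
      · exact absurd (if_neg (Nat.not_le.2 h)) hn
      · exact ⟨n - k, show k + (n - k) = n by omega⟩
    have h2 := Function.Injective.tsum_eq (g := fun m => k + m)
      (fun x y h => Nat.add_left_cancel h) hsupp
    rw [← h2]
    exact tsum_congr fun m => by rw [if_pos (Nat.le_add_right k m)]
  calc (∑' (k : ℕ) (m : ℕ), a (k + m))
      = ∑' (k : ℕ) (n : ℕ), if k ≤ n then a n else 0 := tsum_congr h1
    _ = ∑' (n : ℕ) (k : ℕ), if k ≤ n then a n else 0 := ENNReal.tsum_comm
    _ = ∑' n : ℕ, ENNReal.ofReal ((n : ℝ) + 1) * a n := by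
        refine tsum_congr fun n => ?_
        rw [tsum_eq_sum (s := Finset.range (n+1))
          (fun k hk => by rw [if_neg]; exact fun hc => hk (Finset.mem_range.2 (by omega)))]
        have hall : ∀ k ∈ Finset.range (n+1), (if k ≤ n then a n else 0) = a n := by
          intro k hk
          rw [if_pos (Nat.lt_succ_iff.mp (Finset.mem_range.1 hk))]
        have hcoe : ENNReal.ofReal ((n : ℝ) + 1) = ((n+1 : ℕ) : ℝ≥0∞) := by
          rw [show ((n:ℝ)+1) = ((n+1 : ℕ) : ℝ) by push_cast; ring, ENNReal.ofReal_natCast]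
        rw [Finset.sum_congr rfl hall, Finset.sum_const, Finset.card_range, nsmul_eq_mul, hcoe]


lemma chapman {P : Measure (ℕ → (Fin d → ℤ))} (hP : IsStepProduct d P) (hd : 1 ≤ d)
    (k m : ℕ) :
    ENNReal.ofReal (srwQ d (k + m) 0 0) =
      ∑' z : Fin d → ℤ, ENNReal.ofReal (srwQ d k 0 z) * ENNReal.ofReal (srwQ d m 0 z) := by
  rw [← walk_dist hP hd (k+m) 0]
  have hU : {ω : ℕ → (Fin d → ℤ) | walk d (k+m) ω = 0} =
      ⋃ z : Fin d → ℤ, ({ω | walk d k ω = z} ∩ shiftW k ⁻¹' {ω | walk d m ω = -z}) := by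
    ext ω
    simp only [Set.mem_setOf_eq, Set.mem_iUnion, Set.mem_inter_iff, Set.mem_preimage]
    constructor
    · intro h
      refine ⟨walk d k ω, rfl, ?_⟩
      have h4 := walk_add k m ω
      rw [h] at h4
      have : walk d m (shiftW k ω) = -walk d k ω := by
        have := h4.symm
        linear_combination (norm := abel) this
      exact this
    · rintro ⟨z, h1, h2⟩
      rw [walk_add k m ω, h1, h2]
      abel
  have hdisj : Pairwise (Function.onFun Disjoint (fun z : Fin d → ℤ =>
      ({ω : ℕ → (Fin d → ℤ) | walk d k ω = z} ∩
        shiftW k ⁻¹' {ω | walk d m ω = -z}))) := by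
    intro z z' hzz'
    refine Set.disjoint_left.2 fun ω hω hω' => hzz' ?_
    rw [← hω.1, ← hω'.1]
  have hmeas : ∀ z : Fin d → ℤ, MeasurableSet
      ({ω : ℕ → (Fin d → ℤ) | walk d k ω = z} ∩
        shiftW k ⁻¹' {ω | walk d m ω = -z}) := by
    intro z
    refine (walk_measurable k (measE {z})).inter ?_
    exact ((walk_measurable m (measE {-z}))).preimage
      (measurable_pi_lambda _ fun j => measurable_pi_apply (k + j))
  rw [hU, measure_iUnion hdisj hmeas]
  refine tsum_congr fun z => ?_
  rw [split hP k m _ _ (walk_determined k z) (walk_determined m (-z)),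
    walk_dist hP hd k z, walk_dist hP hd m (-z), srwQ_neg]

/-- For every dimension `d ≥ 1`, one has
`(∫_0^∞ ∑_x Φ(x) p_r(O,x) dr) ⬝ (∫_0^∞ p_θ(O,O) dθ) = ∫_0^∞ ∫_0^∞ p_{r+θ}(O,O) dr dθ`,
as an identity in `[0,∞]`. -/
theorem integral_hitProb_mul_green_eq_double_integral (d : ℕ) (hd : 1 ≤ d)
    (P : Measure (ℕ → (Fin d → ℤ))) (hP : IsStepProduct d P) :
    (∫⁻ r in Set.Ioi (0 : ℝ), ∑' x : Fin d → ℤ, hitProb d P x * ENNReal.ofReal (srwP d r 0 x))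
        * (∫⁻ θ in Set.Ioi (0 : ℝ), ENNReal.ofReal (srwP d θ 0 0))
      = ∫⁻ r in Set.Ioi (0 : ℝ), ∫⁻ θ in Set.Ioi (0 : ℝ),
          ENNReal.ofReal (srwP d (r + θ) 0 0) := by
  -- second factor
  have h2 : (∫⁻ θ in Set.Ioi (0:ℝ), ENNReal.ofReal (srwP d θ 0 0)) =
      ∑' n : ℕ, ENNReal.ofReal (srwQ d n 0 0) := integral_p 0
  -- first factor
  have hae : ∀ x : Fin d → ℤ, AEMeasurable (fun r : ℝ => ENNReal.ofReal (srwP d r 0 x))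
      (volume.restrict (Set.Ioi 0)) := by
    intro x
    refine ⟨fun r => ∑' n : ℕ, ENNReal.ofReal (Real.exp (-r) * (r ^ n / n.factorial)) *
        ENNReal.ofReal (srwQ d n 0 x),
      Measurable.ennreal_tsum (fun n => (coeff_measurable n).mul_const _), ?_⟩
    filter_upwards [ae_restrict_mem measurableSet_Ioi] with r hr
    exact ofReal_srwP d hr.le 0 x
  have hProb : IsProbabilityMeasure P := hP.1
  have h1 : (∫⁻ r in Set.Ioi (0:ℝ),
        ∑' x : Fin d → ℤ, hitProb d P x * ENNReal.ofReal (srwP d r 0 x))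
      = ∑' x : Fin d → ℤ, hitProb d P x * ∑' n : ℕ, ENNReal.ofReal (srwQ d n 0 x) := by
    rw [lintegral_tsum (fun x => (hae x).const_mul _)]
    refine tsum_congr fun x => ?_
    have hne : hitProb d P x ≠ ⊤ := by rw [hitProb]; exact measure_ne_top P _
    rw [lintegral_const_mul' _ _ hne, integral_p x]
  have hck : ∀ k : ℕ, (∑' m : ℕ, ENNReal.ofReal (srwQ d (k+m) 0 0)) =
      ∑' z : Fin d → ℤ, ENNReal.ofReal (srwQ d k 0 z) *
        ∑' n : ℕ, ENNReal.ofReal (srwQ d n 0 z) := by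
    intro k
    calc (∑' m : ℕ, ENNReal.ofReal (srwQ d (k+m) 0 0))
        = ∑' (m : ℕ) (z : Fin d → ℤ),
            ENNReal.ofReal (srwQ d k 0 z) * ENNReal.ofReal (srwQ d m 0 z) :=
          tsum_congr fun m => chapman hP hd k m
      _ = ∑' (z : Fin d → ℤ) (m : ℕ),
            ENNReal.ofReal (srwQ d k 0 z) * ENNReal.ofReal (srwQ d m 0 z) :=
          ENNReal.tsum_comm
      _ = ∑' z : Fin d → ℤ, ENNReal.ofReal (srwQ d k 0 z) *
            ∑' n : ℕ, ENNReal.ofReal (srwQ d n 0 z) :=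
          tsum_congr fun z => ENNReal.tsum_mul_left
  have hrhs : (∑' (k : ℕ) (m : ℕ), ENNReal.ofReal (srwQ d (k+m) 0 0)) =
      ∑' z : Fin d → ℤ, (∑' n : ℕ, ENNReal.ofReal (srwQ d n 0 z)) *
        ∑' n : ℕ, ENNReal.ofReal (srwQ d n 0 z) := by
    rw [tsum_congr hck, ENNReal.tsum_comm]
    exact tsum_congr fun z => ENNReal.tsum_mul_right
  rw [h1, h2, double_integral_eq d, ← count_antidiagonal, hrhs, ← ENNReal.tsum_mul_right]
  refine tsum_congr fun x => ?_
  have hg := green_eq hP hd x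
  calc hitProb d P x * (∑' n : ℕ, ENNReal.ofReal (srwQ d n 0 x)) *
        ∑' n : ℕ, ENNReal.ofReal (srwQ d n 0 0)
      = (hitProb d P x * ∑' n : ℕ, ENNReal.ofReal (srwQ d n 0 0)) *
          ∑' n : ℕ, ENNReal.ofReal (srwQ d n 0 x) := by ring
    _ = (∑' n : ℕ, ENNReal.ofReal (srwQ d n 0 x)) *
          ∑' n : ℕ, ENNReal.ofReal (srwQ d n 0 x) := by rw [← hg]
end
end

section
/- Let d ≥ 5 be an integer and let f : [0,∞) → [0,∞) be measurable. Suppose there exist constants M₁ > 0 and C > 0 such that f is bounded by C on [0, M₁] and f(θ) ≤ C θ^{−d/2} for all θ ≥ M₁. Then lim_{N→∞} N ∫_0^∞ f(θ) (1 − e^{−θ/N}(1 + θ/N)) dθ = 0. -/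
open MeasureTheory ENNReal Filter Set Topology

noncomputable section

lemma key_exp_bound (x : ℝ) (hx : 0 ≤ x) :
    1 - Real.exp (-x) * (1 + x) ≤ 3 * x ^ (5/4 : ℝ) := by
  rcases eq_or_lt_of_le hx with h0 | hx0
  · simp [← h0, Real.zero_rpow (by norm_num : (5/4:ℝ) ≠ 0)]
  rcases le_or_gt x 1 with h1 | h1
  · have hb := Real.abs_exp_sub_one_sub_id_le (x := -x)
      (by rw [abs_neg, abs_of_nonneg hx]; exact h1)
    have h2 : (1:ℝ) - x - x^2 ≤ Real.exp (-x) := by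
      have := abs_le.1 hb
      nlinarith [this.1]
    have h3 : x ^ (2:ℝ) ≤ x ^ (5/4 : ℝ) :=
      Real.rpow_le_rpow_of_exponent_ge hx0 h1 (by norm_num)
    have h4 : x ^ (2:ℝ) = x ^ 2 := by
      rw [show (2:ℝ) = ((2:ℕ):ℝ) by norm_num, Real.rpow_natCast]
    rw [h4] at h3
    nlinarith [mul_le_mul_of_nonneg_left h2 (by linarith : (0:ℝ) ≤ 1 + x), sq_nonneg x,
      mul_nonneg (sq_nonneg x) hx]
  · have hr : (1:ℝ) ≤ x ^ (5/4:ℝ) :=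
      Real.one_le_rpow h1.le (by norm_num)
    have he : 0 ≤ Real.exp (-x) * (1 + x) := by positivity
    linarith

/-- Let `d ≥ 5` and let `f : [0,∞) → [0,∞)` be measurable. Suppose there exist constants
`M₁ > 0` and `C > 0` such that `f` is bounded by `C` on `[0, M₁]` and `f(θ) ≤ C θ^{-d/2}`
for all `θ ≥ M₁`. Then `lim_{N→∞} N ∫_0^∞ f(θ)(1 - e^{-θ/N}(1 + θ/N)) dθ = 0`. -/
theorem tendsto_N_mul_integral_zero (d : ℕ) (hd : 5 ≤ d) (f : ℝ → ℝ)
    (hf : Measurable f) (hf0 : ∀ θ, 0 ≤ θ → 0 ≤ f θ)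
    (M₁ C : ℝ) (hM₁ : 0 < M₁) (hC : 0 < C)
    (hbdd : ∀ θ, 0 ≤ θ → θ ≤ M₁ → f θ ≤ C)
    (hdecay : ∀ θ, M₁ ≤ θ → f θ ≤ C * θ ^ (-(d : ℝ) / 2)) :
    Tendsto (fun N : ℝ => ENNReal.ofReal N * ∫⁻ θ in Set.Ioi (0 : ℝ),
        ENNReal.ofReal (f θ) * ENNReal.ofReal (1 - Real.exp (-θ / N) * (1 + θ / N)))
      atTop (nhds 0) := by
  set K : ℝ≥0∞ := ∫⁻ θ in Set.Ioi (0:ℝ), ENNReal.ofReal (f θ * θ ^ (5/4:ℝ)) with hKdef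
  set B : ℝ := max M₁ 1 with hBdef
  have hBM : M₁ ≤ B := le_max_left _ _
  have hB1 : (1:ℝ) ≤ B := le_max_right _ _
  have hB0 : (0:ℝ) < B := lt_of_lt_of_le one_pos hB1
  have hK : K ≠ ⊤ := by
    rw [hKdef, show Set.Ioi (0:ℝ) = Set.Ioc 0 B ∪ Set.Ioi B from
      (Set.Ioc_union_Ioi_eq_Ioi hB0.le).symm,
      lintegral_union measurableSet_Ioi (Set.Ioc_disjoint_Ioi le_rfl)]
    have hd0 : -(d:ℝ)/2 ≤ 0 := by
      have : (0:ℝ) ≤ d := Nat.cast_nonneg d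
      linarith
    set C₀ : ℝ := C * max 1 (M₁ ^ (-(d:ℝ)/2)) * B ^ (5/4:ℝ) with hC₀def
    have piece1 : ∫⁻ θ in Set.Ioc (0:ℝ) B, ENNReal.ofReal (f θ * θ ^ (5/4:ℝ)) ≠ ⊤ := by
      have hb : ∀ θ ∈ Set.Ioc (0:ℝ) B, ENNReal.ofReal (f θ * θ ^ (5/4:ℝ)) ≤
          ENNReal.ofReal C₀ := by
        intro θ hθ
        apply ENNReal.ofReal_le_ofReal
        have hθ0 : 0 < θ := hθ.1
        have hfb : f θ ≤ C * max 1 (M₁ ^ (-(d:ℝ)/2)) := by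
          rcases le_or_gt θ M₁ with h | h
          · calc f θ ≤ C := hbdd θ hθ0.le h
              _ = C * 1 := (mul_one C).symm
              _ ≤ _ := by gcongr; exact le_max_left _ _
          · calc f θ ≤ C * θ ^ (-(d:ℝ)/2) := hdecay θ h.le
              _ ≤ C * M₁ ^ (-(d:ℝ)/2) :=
                  mul_le_mul_of_nonneg_left (Real.rpow_le_rpow_of_nonpos hM₁ h.le hd0) hC.le
              _ ≤ _ := by gcongr; exact le_max_right _ _
        have hpb : θ ^ (5/4:ℝ) ≤ B ^ (5/4:ℝ) :=
          Real.rpow_le_rpow hθ0.le hθ.2 (by norm_num)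
        have h1 : (0:ℝ) ≤ max 1 (M₁ ^ (-(d:ℝ)/2)) := le_trans zero_le_one (le_max_left _ _)
        calc f θ * θ ^ (5/4:ℝ) ≤ (C * max 1 (M₁ ^ (-(d:ℝ)/2))) * B ^ (5/4:ℝ) := by
              apply mul_le_mul hfb hpb (Real.rpow_nonneg hθ0.le _)
              positivity
          _ = C₀ := rfl
      refine ((setLIntegral_mono' measurableSet_Ioc hb).trans_lt ?_).ne
      rw [setLIntegral_const]
      exact ENNReal.mul_lt_top ENNReal.ofReal_lt_top measure_Ioc_lt_top
    have piece2 : ∫⁻ θ in Set.Ioi B, ENNReal.ofReal (f θ * θ ^ (5/4:ℝ)) ≠ ⊤ := by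
      have hb : ∀ θ ∈ Set.Ioi B, ENNReal.ofReal (f θ * θ ^ (5/4:ℝ)) ≤
          ENNReal.ofReal (C * θ ^ (-(5/4):ℝ)) := by
        intro θ hθ
        apply ENNReal.ofReal_le_ofReal
        have hθ1 : 1 ≤ θ := le_trans hB1 (le_of_lt hθ)
        have hθ0 : 0 < θ := lt_of_lt_of_le one_pos hθ1
        have h5 : (5:ℝ) ≤ d := by exact_mod_cast hd
        have hfb : f θ ≤ C * θ ^ (-(5/2):ℝ) := by
          calc f θ ≤ C * θ ^ (-(d:ℝ)/2) := hdecay θ (le_trans hBM (le_of_lt hθ))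
            _ ≤ C * θ ^ (-(5/2):ℝ) :=
                mul_le_mul_of_nonneg_left
                  (Real.rpow_le_rpow_of_exponent_le hθ1 (by linarith)) hC.le
        calc f θ * θ ^ (5/4:ℝ) ≤ (C * θ ^ (-(5/2):ℝ)) * θ ^ (5/4:ℝ) := by
              apply mul_le_mul_of_nonneg_right hfb (Real.rpow_nonneg hθ0.le _)
          _ = C * θ ^ (-(5/4):ℝ) := by
              rw [mul_assoc, ← Real.rpow_add hθ0]; norm_num
      have hint : IntegrableOn (fun θ : ℝ => C * θ ^ (-(5/4):ℝ)) (Set.Ioi B) :=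
        (integrableOn_Ioi_rpow_of_lt (by norm_num) hB0).const_mul C
      exact ((setLIntegral_mono' measurableSet_Ioi hb).trans_lt
        hint.lintegral_lt_top).ne
    exact ENNReal.add_ne_top.mpr ⟨piece1, piece2⟩
  apply tendsto_of_tendsto_of_tendsto_of_le_of_le'
    (f := fun N : ℝ => ENNReal.ofReal N * ∫⁻ θ in Set.Ioi (0 : ℝ),
        ENNReal.ofReal (f θ) * ENNReal.ofReal (1 - Real.exp (-θ / N) * (1 + θ / N)))
    (g := fun _ : ℝ => (0:ℝ≥0∞)) (h := fun N : ℝ => ENNReal.ofReal (3 * N ^ (-(1/4):ℝ)) * K)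
    tendsto_const_nhds
  · -- upper function tends to 0
    have h1 : Tendsto (fun N : ℝ => 3 * N ^ (-(1/4):ℝ)) atTop (nhds 0) := by
      have := (tendsto_rpow_neg_atTop (by norm_num : (0:ℝ) < 1/4)).const_mul (3:ℝ)
      simpa using this
    have h2 := ENNReal.Tendsto.mul_const (b := K) (ENNReal.tendsto_ofReal h1) (Or.inr hK)
    simpa using h2
  · exact Eventually.of_forall fun N => zero_le
  · -- main bound, eventually
    filter_upwards [eventually_ge_atTop (1:ℝ)] with N hN
    have hN0 : (0:ℝ) < N := lt_of_lt_of_le one_pos hN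
    have hNpow : N ^ (-(1/4):ℝ) = N * N ^ (-(5/4):ℝ) := by
      rw [show (-(1/4):ℝ) = 1 + -(5/4) by norm_num, Real.rpow_add hN0, Real.rpow_one]
    have hpt : ∀ θ ∈ Set.Ioi (0:ℝ),
        ENNReal.ofReal (f θ) * ENNReal.ofReal (1 - Real.exp (-θ / N) * (1 + θ / N)) ≤
        ENNReal.ofReal (3 * N ^ (-(5/4):ℝ)) * ENNReal.ofReal (f θ * θ ^ (5/4:ℝ)) := by
      intro θ hθ
      have hθ0 : 0 < θ := hθ
      have hdiv : 0 ≤ θ / N := div_nonneg hθ0.le hN0.le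
      have h1 : 1 - Real.exp (-θ / N) * (1 + θ / N) ≤ 3 * (θ / N) ^ (5/4:ℝ) := by
        have := key_exp_bound (θ / N) hdiv
        rwa [← neg_div] at this
      have h2 : (θ / N) ^ (5/4:ℝ) = θ ^ (5/4:ℝ) * N ^ (-(5/4):ℝ) := by
        rw [Real.div_rpow hθ0.le hN0.le, Real.rpow_neg hN0.le, div_eq_mul_inv]
      calc ENNReal.ofReal (f θ) * ENNReal.ofReal (1 - Real.exp (-θ / N) * (1 + θ / N))
          ≤ ENNReal.ofReal (f θ) * ENNReal.ofReal (3 * N ^ (-(5/4):ℝ) * θ ^ (5/4:ℝ)) :=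
            mul_le_mul_right (ENNReal.ofReal_le_ofReal (by
              calc 1 - Real.exp (-θ / N) * (1 + θ / N) ≤ 3 * (θ / N) ^ (5/4:ℝ) := h1
                _ = 3 * N ^ (-(5/4):ℝ) * θ ^ (5/4:ℝ) := by rw [h2]; ring)) _
        _ = ENNReal.ofReal (3 * N ^ (-(5/4):ℝ)) * ENNReal.ofReal (f θ * θ ^ (5/4:ℝ)) := by
            rw [ENNReal.ofReal_mul (by positivity), ENNReal.ofReal_mul (hf0 θ hθ0.le)]
            ring
    calc ENNReal.ofReal N * ∫⁻ θ in Set.Ioi (0:ℝ),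
          ENNReal.ofReal (f θ) * ENNReal.ofReal (1 - Real.exp (-θ / N) * (1 + θ / N))
        ≤ ENNReal.ofReal N * ∫⁻ θ in Set.Ioi (0:ℝ),
            ENNReal.ofReal (3 * N ^ (-(5/4):ℝ)) * ENNReal.ofReal (f θ * θ ^ (5/4:ℝ)) :=
          mul_le_mul_right (setLIntegral_mono' measurableSet_Ioi hpt) _
      _ = ENNReal.ofReal N * (ENNReal.ofReal (3 * N ^ (-(5/4):ℝ)) * K) := by
          rw [lintegral_const_mul' _ _ ENNReal.ofReal_ne_top]
      _ = ENNReal.ofReal (3 * N ^ (-(1/4):ℝ)) * K := by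
          rw [← mul_assoc, ← ENNReal.ofReal_mul hN0.le]
          congr 2
          rw [hNpow]; ring
end
end
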